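/- arXiv:1202.1308 — 6 statements merged into one kernel-verified Lean document; each statement's English description precedes it below -/
import Mathlib

section
/- Let F be a field, G a finite group, H a subgroup of G, and N a normal subgroup of H. Let M be a finite-dimensional projective F[G]-module. Then the space of N-invariants M^N = {m ∈ M : n·m = m for all n ∈ N}, equipped with the F[H/N]-module structure induced by the H-action (which preserves M^N and is trivial on N), is a projective F[H/N]-module. -/
/-!
Restricted to `H`, the regular module `F[G]` is free on a right transversal `T` of `H`, and
the `N`-invariants of `F[H]` are free of rank one over `F[H ⧸ N]`, spanned by the sum over `N`.
Hence the `N`-invariants of `F[G]` form the free `F[H ⧸ N]`-module `T →₀ F[H ⧸ N]`, an invariant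
`x` corresponding to `t ↦ (q ↦ x (q.out * t))`. Taking `N`-invariants commutes with direct sums
and is functorial, so it turns a splitting of `M` off the free module `M →₀ F[G]` into a
splitting of `M^N` off a free `F[H ⧸ N]`-module.
-/

open MonoidAlgebra

theorem MonoidAlgebra.coeff_mul_of_of_mul_eq_self {R G : Type} [Semiring R] [Group G]
    {x : R[G]} {k : G} (hx : of R G k * x = x) (g : G) : x.coeff (k * g) = x.coeff g := by
  conv_lhs => rw [← hx]
  simp

theorem MonoidAlgebra.coeff_out_mul_of_invariant {R G : Type} [Semiring R] [Group G]
    {H : Subgroup G} {N : Subgroup H} [N.Normal] {x : R[G]}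
    (hx : ∀ n : N, of R G ((n : H) : G) * x = x) (h : H) (g : G) :
    x.coeff (((QuotientGroup.mk h : H ⧸ N).out : H) * g) = x.coeff (h * g) := by
  obtain ⟨n, hn⟩ := QuotientGroup.mk_out_eq_mul N h
  have hconj : h * (n : H) * h⁻¹ ∈ N := ‹N.Normal›.conj_mem _ n.2 h
  rw [hn, ← coeff_mul_of_of_mul_eq_self (hx ⟨_, hconj⟩) (h * g)]
  congr 1
  push_cast
  group

theorem Subgroup.IsComplement.equiv_mul {G : Type} [Group G] {H : Subgroup G} {T : Set G}
    (hT : IsComplement (H : Set G) T) (h : H) (t : T) : hT.equiv (h * t) = (h, t) :=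
  hT.equiv.apply_symm_apply (h, t)

section IsInvariantsModel

variable {F G : Type} [CommRing F] [Group G] {H : Subgroup G} (N : Subgroup H) [N.Normal]

/-- `e` identifies the `F[H ⧸ N]`-module `U` with the `N`-invariants of the `F[G]`-module `W`,
the action of `H ⧸ N` on `U` being induced by that of `H` on `W`. -/
structure IsInvariantsModel {U W : Type} [AddCommGroup U] [Module F U] [Module F[H ⧸ N] U]
    [AddCommGroup W] [Module F W] [Module F[G] W] (e : U →ₗ[F] W) : Prop where
  injective : Function.Injective e
  range_eq : Set.range e = {w : W | ∀ n : N, of F G ((n : H) : G) • w = w}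
  map_of_smul : ∀ (h : H) (u : U),
    e (of F (H ⧸ N) (QuotientGroup.mk h) • u) = of F G (h : G) • e u

namespace IsInvariantsModel

variable {N} {U W : Type} [AddCommGroup U] [Module F U] [Module F[H ⧸ N] U]
  [AddCommGroup W] [Module F W] [Module F[G] W] {e : U →ₗ[F] W}

theorem mem_range_iff (he : IsInvariantsModel N e) {w : W} :
    w ∈ Set.range e ↔ ∀ n : N, of F G ((n : H) : G) • w = w := by
  rw [he.range_eq]
  rfl

theorem finsupp (he : IsInvariantsModel N e) (ι : Type) :
    IsInvariantsModel N (Finsupp.mapRange.linearMap e : (ι →₀ U) →ₗ[F] (ι →₀ W)) where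
  injective := Finsupp.mapRange_injective e e.map_zero he.injective
  range_eq := by
    ext f
    simp only [Set.mem_ofPred_eq, Finsupp.ext_iff, Finsupp.smul_apply]
    constructor
    · rintro ⟨f', rfl⟩ n i
      exact he.mem_range_iff.1 ⟨f' i, rfl⟩ n
    · intro hf
      have h0 : Function.invFun e 0 = 0 :=
        he.injective (by rw [Function.invFun_eq ⟨0, map_zero e⟩, map_zero])
      have hfe : ∀ i, e (Function.invFun e (f i)) = f i := fun i ↦
        Function.invFun_eq (he.mem_range_iff.2 fun n ↦ hf n i)
      exact ⟨Finsupp.mapRange _ h0 f, Finsupp.ext fun i ↦ by simp [hfe]⟩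
  map_of_smul h f := by
    ext i
    simpa using he.map_of_smul h (f i)

variable [IsScalarTower F F[H ⧸ N] U] [IsScalarTower F F[G] W]
  {V W' : Type} [AddCommGroup V] [Module F V] [Module F[H ⧸ N] V] [IsScalarTower F F[H ⧸ N] V]
  [AddCommGroup W'] [Module F W'] [Module F[G] W'] [IsScalarTower F F[G] W'] {e' : V →ₗ[F] W'}

theorem exists_linearMap_comp (he : IsInvariantsModel N e) (he' : IsInvariantsModel N e')
    (f : W →ₗ[F[G]] W') : ∃ φ : U →ₗ[F[H ⧸ N]] V, ∀ u, e' (φ u) = f (e u) := by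
  have hmem : ∀ u, f (e u) ∈ LinearMap.range e' := fun u ↦ he'.mem_range_iff.2 fun n ↦ by
    rw [← map_smul, he.mem_range_iff.1 ⟨u, rfl⟩ n]
  let φ : U →ₗ[F] V := (LinearEquiv.ofInjective e' he'.injective).symm.toLinearMap ∘ₗ
    ((f.restrictScalars F) ∘ₗ e).codRestrict _ hmem
  have hφ : ∀ u, e' (φ u) = f (e u) := fun u ↦
    LinearEquiv.ofInjective_symm_apply (h := he'.injective) e' _
  refine ⟨equivariantOfLinearOfComm φ fun q u ↦ he'.injective ?_, hφ⟩
  obtain ⟨h, rfl⟩ := QuotientGroup.mk_surjective q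
  rw [← of_apply, hφ, he.map_of_smul, map_smul, he'.map_of_smul, hφ]

end IsInvariantsModel

end IsInvariantsModel

namespace Subgroup.IsComplement

variable {G : Type} [Group G] [Finite G] {H : Subgroup G} {T : Set G}
  (hT : IsComplement (H : Set G) T) (F : Type) [CommRing F] (N : Subgroup H) [N.Normal]

noncomputable def freeToInvariants : (T →₀ F[H ⧸ N]) →ₗ[F] F[G] where
  toFun f := ofCoeff <| Finsupp.equivFunOnFinite.symm fun g ↦
    (f (hT.equiv g).2).coeff (QuotientGroup.mk (hT.equiv g).1)
  map_add' f f' := by ext; simp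
  map_smul' c f := by ext; simp

theorem coeff_freeToInvariants_mul (f : T →₀ F[H ⧸ N]) (h : H) (t : T) :
    (hT.freeToInvariants F N f).coeff (h * t) = (f t).coeff h := by
  simp only [freeToInvariants, LinearMap.coe_mk, AddHom.coe_mk, coeff_ofCoeff,
    Finsupp.coe_equivFunOnFinite_symm, hT.equiv_mul]

theorem freeToInvariants_of_smul (h : H) (f : T →₀ F[H ⧸ N]) :
    hT.freeToInvariants F N (of F (H ⧸ N) (QuotientGroup.mk h) • f) =
      of F G (h : G) * hT.freeToInvariants F N f := by
  ext g
  obtain ⟨⟨h', t⟩, rfl⟩ := hT.2 g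
  dsimp only
  rw [of_apply, of_apply, coeff_single_mul_apply, one_mul, ← mul_assoc, ← Subgroup.coe_inv,
    ← Subgroup.coe_mul, coeff_freeToInvariants_mul, coeff_freeToInvariants_mul,
    Finsupp.smul_apply, smul_eq_mul, coeff_single_mul_apply, one_mul, QuotientGroup.mk_mul,
    QuotientGroup.mk_inv]

theorem freeToInvariants_injective : Function.Injective (hT.freeToInvariants F N) := by
  refine (injective_iff_map_eq_zero _).2 fun f hf ↦ Finsupp.ext fun t ↦ ?_
  ext q
  obtain ⟨h, rfl⟩ := QuotientGroup.mk_surjective q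
  rw [← hT.coeff_freeToInvariants_mul, hf]
  rfl

theorem mem_range_freeToInvariants {x : F[G]} (hx : ∀ n : N, of F G ((n : H) : G) * x = x) :
    x ∈ Set.range (hT.freeToInvariants F N) := by
  refine ⟨Finsupp.equivFunOnFinite.symm fun t ↦ ofCoeff <| Finsupp.equivFunOnFinite.symm
    fun q ↦ x.coeff ((q.out : H) * t), ?_⟩
  ext g
  obtain ⟨⟨h, t⟩, rfl⟩ := hT.2 g
  rw [coeff_freeToInvariants_mul]
  exact coeff_out_mul_of_invariant hx h t

theorem isInvariantsModel_freeToInvariants : IsInvariantsModel N (hT.freeToInvariants F N) where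
  injective := hT.freeToInvariants_injective F N
  range_eq := by
    ext x
    refine ⟨?_, hT.mem_range_freeToInvariants F N⟩
    rintro ⟨f, rfl⟩ n
    rw [smul_eq_mul, ← freeToInvariants_of_smul, (QuotientGroup.eq_one_iff _).2 n.2, map_one,
      one_smul]
  map_of_smul := hT.freeToInvariants_of_smul F N

end Subgroup.IsComplement

theorem projective_of_invariants_of_projective_general
    (F : Type) [Field F] (G : Type) [Group G] [Finite G]
    (H : Subgroup G) (N : Subgroup H) [N.Normal]
    (M : Type) [AddCommGroup M] [Module F M]
    [Module (MonoidAlgebra F G) M] [IsScalarTower F (MonoidAlgebra F G) M]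
    (hM : Module.Projective (MonoidAlgebra F G) M)
    (V : Type) [AddCommGroup V] [Module F V]
    [Module (MonoidAlgebra F (H ⧸ N)) V] [IsScalarTower F (MonoidAlgebra F (H ⧸ N)) V]
    (e : V →ₗ[F] M) (he : Function.Injective e)
    (hrange : Set.range e = {m : M | ∀ n : N, MonoidAlgebra.of F G ((n : H) : G) • m = m})
    (hcompat : ∀ (h : H) (v : V),
      e (MonoidAlgebra.of F (H ⧸ N) (QuotientGroup.mk h) • v) =
        MonoidAlgebra.of F G (h : G) • e v) :
    Module.Projective (MonoidAlgebra F (H ⧸ N)) V := by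
  obtain ⟨s, hs⟩ := hM.out
  obtain ⟨T, hT, -⟩ := H.exists_isComplement_right 1
  have hV : IsInvariantsModel N e := ⟨he, hrange, hcompat⟩
  have hP := (hT.isInvariantsModel_freeToInvariants F N).finsupp M
  obtain ⟨i, hi⟩ := hV.exists_linearMap_comp hP s
  obtain ⟨r, hr⟩ :=
    hP.exists_linearMap_comp hV (Finsupp.linearCombination (MonoidAlgebra F G) id)
  exact Module.Projective.of_split i r (LinearMap.ext fun v ↦ he (by simp [hr, hi, hs (e v)]))

/-- Invariants of a projective module under a normal subgroup of a subgroup, carrying the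
induced module structure over the group algebra of the quotient, form a projective module.

The `F[H/N]`-module `V` is identified, via the `F`-linear injection `e`, with the space
of `N`-invariants of `M`, in such a way that the action of the class of `h : H` on `V`
corresponds to the action of `h` (as an element of `G`) on `M`. -/
theorem projective_of_invariants_of_projective
    (F : Type) [Field F] (G : Type) [Group G] [Finite G]
    (H : Subgroup G) (N : Subgroup H) [N.Normal]
    (M : Type) [AddCommGroup M] [Module F M]
    [Module (MonoidAlgebra F G) M] [IsScalarTower F (MonoidAlgebra F G) M]
    [FiniteDimensional F M]
    (hM : Module.Projective (MonoidAlgebra F G) M)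
    (V : Type) [AddCommGroup V] [Module F V]
    [Module (MonoidAlgebra F (H ⧸ N)) V] [IsScalarTower F (MonoidAlgebra F (H ⧸ N)) V]
    (e : V →ₗ[F] M) (he : Function.Injective e)
    (hrange : Set.range e = {m : M | ∀ n : N, MonoidAlgebra.of F G ((n : H) : G) • m = m})
    (hcompat : ∀ (h : H) (v : V),
      e (MonoidAlgebra.of F (H ⧸ N) (QuotientGroup.mk h) • v) =
        MonoidAlgebra.of F G (h : G) • e v) :
    Module.Projective (MonoidAlgebra F (H ⧸ N)) V :=
  projective_of_invariants_of_projective_general F G H N M hM V e he hrange hcompat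
end

section
/- Let p be a prime, F a field of characteristic p, G a finite group, and N a normal subgroup of G such that p does not divide the index |G : N|. Let M be a finite-dimensional F[G]-module. Then the socle of M regarded as an F[N]-module (by restriction) is equal, as a subspace of M, to the socle of M as an F[G]-module. -/
/-!
Let `V` be the `F[N]`-socle of `M`. As `N` is normal, multiplication by `g ∈ G` is semilinear
over the conjugation automorphism of `F[N]`, so it permutes the simple `F[N]`-submodules and `V`
is an `F[G]`-submodule. A simple `F[G]`-submodule `S` contains a simple `F[N]`-submodule, so
`S ⊓ V ≠ ⊥` and hence `S ≤ V` (Clifford). Conversely, `V` is semisimple over `F[N]`, and since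
`[G : N]` is invertible in `F`, averaging an `F[N]`-linear projection over the cosets of `N`
turns it into an `F[G]`-linear one; so `V` is semisimple over `F[G]` (relative Maschke) and lies
in the `F[G]`-socle.
-/

/-- The socle of a module: the sum of all of its simple submodules. -/
def moduleSocle (R M : Type) [Ring R] [AddCommGroup M] [Module R M] : Submodule R M :=
  sSup {S : Submodule R M | IsSimpleModule R S}

open MonoidAlgebra

section Socle

variable {R M : Type} [Ring R] [AddCommGroup M] [Module R M]

theorem moduleSocle_eq_sSup_isAtom : moduleSocle R M = sSup {S : Submodule R M | IsAtom S} := by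
  simp_rw [moduleSocle, isSimpleModule_iff_isAtom]

theorem isSemisimpleModule_moduleSocle : IsSemisimpleModule R (moduleSocle R M) := by
  rw [moduleSocle, sSup_eq_iSup]
  exact isSemisimpleModule_biSup_of_isSemisimpleModule_submodule fun _ (_ : IsSimpleModule R _) =>
    inferInstance

theorem le_moduleSocle (P : Submodule R M) [IsSemisimpleModule R P] : P ≤ moduleSocle R M := by
  rw [← P.map_subtype_top, ← IsSemisimpleModule.sSup_simples_eq_top R P,
    (Submodule.gc_map_comap P.subtype).l_sSup]
  refine iSup₂_le fun S (hS : IsSimpleModule R S) => le_sSup ?_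
  exact .congr (S.equivMapOfInjective _ P.injective_subtype).symm

theorem map_moduleSocle {R₂ M₂ : Type} [Ring R₂] [AddCommGroup M₂] [Module R₂ M₂]
    {σ : R →+* R₂} [RingHomSurjective σ] (f : M →ₛₗ[σ] M₂) (hf : Function.Bijective f) :
    (moduleSocle R M).map f = moduleSocle R₂ M₂ := by
  let e := Submodule.orderIsoMapComapOfBijective f hf
  rw [moduleSocle_eq_sSup_isAtom, moduleSocle_eq_sSup_isAtom]
  change e _ = _
  rw [e.map_sSup_eq_sSup_symm_preimage]
  congr 1
  ext S
  exact e.symm.isAtom_iff S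

end Socle

namespace LinearMap

variable {k G V : Type*} [CommRing k] [Group G] [AddCommGroup V] [Module k V] [Module k[G] V]
  [IsScalarTower k k[G] V] {π : V →ₗ[k] V}

/-- The relative trace `∑_{gH ∈ G/H} g π g⁻¹`, which does not depend on the choice of coset
representatives when `π` commutes with `H` (`conjugate_mul_inv_eq`). -/
noncomputable def relativeTrace (H : Subgroup G) [Fintype (G ⧸ H)] (π : V →ₗ[k] V) :
    V →ₗ[k] V :=
  ∑ q : G ⧸ H, π.conjugate q.out⁻¹

theorem conjugate_inv_apply (g : G) (v : V) :
    π.conjugate g⁻¹ v = of k G g • π (of k G g⁻¹ • v) := by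
  rw [conjugate_apply, inv_inv, of_apply, of_apply]

theorem conjugate_mul_inv_eq {H : Subgroup G}
    (hπ : ∀ h ∈ H, ∀ v, π (of k G h • v) = of k G h • π v) (g : G) {h : G} (hh : h ∈ H) :
    π.conjugate (g * h)⁻¹ = π.conjugate g⁻¹ := by
  ext v
  rw [conjugate_inv_apply, conjugate_inv_apply, mul_inv_rev, map_mul, map_mul, mul_smul, mul_smul,
    hπ _ (H.inv_mem hh), ← mul_smul (of k G h), ← map_mul, mul_inv_cancel, map_one, one_smul]

theorem conjugate_inv_apply_of_mem {A : Submodule k[G] V} (hπ : ∀ v ∈ A, π v = v) (g : G)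
    {v : V} (hv : v ∈ A) : π.conjugate g⁻¹ v = v := by
  rw [conjugate_inv_apply, hπ _ (A.smul_mem _ hv), ← mul_smul, ← map_mul, mul_inv_cancel, map_one,
    one_smul]

variable {H : Subgroup G} [Fintype (G ⧸ H)]

theorem relativeTrace_of_smul (hπ : ∀ h ∈ H, ∀ v, π (of k G h • v) = of k G h • π v) (g : G)
    (v : V) : relativeTrace H π (of k G g • v) = of k G g • relativeTrace H π v := by
  have hconj (q : G ⧸ H) : π.conjugate (g • q).out⁻¹ = π.conjugate (g * q.out)⁻¹ := by
    obtain ⟨h, e⟩ := QuotientGroup.mk_out_eq_mul H (g * q.out)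
    rw [← MulAction.Quotient.mk_smul_out, smul_eq_mul, e, conjugate_mul_inv_eq hπ _ h.2]
  rw [relativeTrace, sum_apply, ← Equiv.sum_comp (MulAction.toPerm g), sum_apply,
    Finset.smul_sum]
  refine Finset.sum_congr rfl fun q _ => ?_
  rw [MulAction.toPerm_apply, hconj, conjugate_inv_apply, conjugate_inv_apply, mul_inv_rev,
    map_mul, mul_smul, ← mul_smul (of k G _) (of k G g), ← map_mul, inv_mul_cancel_right]

theorem relativeTrace_apply_of_mem {A : Submodule k[G] V} (hπ : ∀ v ∈ A, π v = v) {v : V}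
    (hv : v ∈ A) : relativeTrace H π v = H.index • v := by
  simp only [relativeTrace, sum_apply, conjugate_inv_apply_of_mem hπ _ hv, Finset.sum_const,
    Finset.card_univ, ← Nat.card_eq_fintype_card, ← H.index_eq_card]

theorem relativeTrace_mem {A : Submodule k[G] V} (hπ : ∀ v, π v ∈ A) (v : V) :
    relativeTrace H π v ∈ A := by
  rw [relativeTrace, sum_apply]
  exact A.sum_mem fun q _ => by rw [conjugate_inv_apply]; exact A.smul_mem _ (hπ _)

end LinearMap

noncomputable abbrev MonoidAlgebra.subgroupModule {k G : Type*} [CommSemiring k] [Group G]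
    (H : Subgroup G) : Module k[H] k[G] :=
  Module.compHom k[G] (mapDomainRingHom k H.subtype)

attribute [local instance] MonoidAlgebra.subgroupModule

namespace MonoidAlgebra

section SubgroupAlgebra

variable {k G V : Type*} [CommSemiring k] [Group G] {H : Subgroup G} [AddCommMonoid V]
  [Module k[G] V] [Module k[H] V]

theorem subgroup_smul_eq [IsScalarTower k[H] k[G] V] (x : k[H]) (v : V) :
    x • v = mapDomainRingHom k H.subtype x • v := by
  rw [← smul_one_smul k[G]]
  exact congrArg (· • v) (mul_one _)

theorem of_subgroup_smul [IsScalarTower k[H] k[G] V] (h : H) (v : V) :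
    of k H h • v = of k G h • v := by
  simp [subgroup_smul_eq]

theorem isScalarTower_of_of_smul_eq [Module k V] [IsScalarTower k k[G] V] [IsScalarTower k k[H] V]
    (hH : ∀ (h : H) (v : V), of k H h • v = of k G h • v) : IsScalarTower k[H] k[G] V where
  smul_assoc x y v := by
    change (mapDomainRingHom k H.subtype x * y) • v = x • y • v
    rw [mul_smul]
    generalize y • v = v
    induction x using MonoidAlgebra.induction_linear with
    | zero => simp only [map_zero, zero_smul]
    | add x y hx hy => rw [map_add, add_smul, add_smul, hx, hy]
    | single h c =>
      rw [← mul_one c, ← smul_single', smul_assoc, ← of_apply, hH, ← smul_assoc]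
      simp

theorem of_mul_mapDomainRingHom {N : Subgroup G} [N.Normal] (g : G) (x : k[N]) :
    of k G g * mapDomainRingHom k N.subtype x =
      mapDomainRingHom k N.subtype (mapDomainRingEquiv k (MulAut.conjNormal g) x) * of k G g := by
  induction x using MonoidAlgebra.induction_linear with
  | zero => simp only [map_zero, mul_zero, zero_mul]
  | add x y hx hy => rw [map_add, map_add, map_add, mul_add, add_mul, hx, hy]
  | single n c => simp [single_mul_single, MulAut.conjNormal_apply]

end SubgroupAlgebra

section RelativeMaschke

variable {F G V : Type*} [Field F] [Group G] {H : Subgroup G} [AddCommGroup V] [Module F V]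
  [Module F[G] V] [IsScalarTower F F[G] V]

theorem Submodule.exists_isCompl_of_isProj (hH : (H.index : F) ≠ 0) {A : Submodule F[G] V}
    {π : V →ₗ[F] V} (hπ : LinearMap.IsProj (A.restrictScalars F) π)
    (hπH : ∀ h ∈ H, ∀ v, π (of F G h • v) = of F G h • π v) :
    ∃ C : Submodule F[G] V, IsCompl A C := by
  have : H.FiniteIndex := ⟨fun h => hH (by rw [h, Nat.cast_zero])⟩
  have := Fintype.ofFinite (G ⧸ H)
  let ψ : V →ₗ[F[G]] V := equivariantOfLinearOfComm ((H.index : F)⁻¹ • π.relativeTrace H)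
    fun g v => by
      simp only [LinearMap.smul_apply, ← of_apply, π.relativeTrace_of_smul hπH,
        smul_comm _ (of F G g)]
  refine ⟨LinearMap.ker ψ, LinearMap.IsProj.isCompl ⟨fun v => ?_, fun v hv => ?_⟩⟩
  · exact A.smul_of_tower_mem _ (π.relativeTrace_mem hπ.map_mem v)
  · simp [ψ, π.relativeTrace_apply_of_mem hπ.map_id hv, ← Nat.cast_smul_eq_nsmul F, smul_smul, hH]

theorem isSemisimpleModule_of_subgroup (hH : (H.index : F) ≠ 0) [Module F[H] V]
    [IsScalarTower F F[H] V] [IsScalarTower F[H] F[G] V] [IsSemisimpleModule F[H] V] :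
    IsSemisimpleModule F[G] V where
  exists_isCompl A := by
    obtain ⟨C, hC⟩ := exists_isCompl (A.restrictScalars F[H])
    let π := (A.restrictScalars F[H]).projection C hC
    refine Submodule.exists_isCompl_of_isProj hH (π := π.restrictScalars F)
      ⟨_root_.Submodule.projection_apply_mem hC,
        fun _ => _root_.Submodule.projection_apply_of_mem_left hC⟩ ?_
    intro h hh v
    have := π.map_smul (of F H ⟨h, hh⟩) v
    rw [of_subgroup_smul, of_subgroup_smul] at this
    exact this

end RelativeMaschke

section NormalSubgroup

variable {F G : Type} [Field F] [Group G] {N : Subgroup G} [N.Normal]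
  {M : Type} [AddCommGroup M] [Module F[G] M] [Module F[N] M] [IsScalarTower F[N] F[G] M]

variable (F N M) in
noncomputable def groupSMulSemilinearMap (g : G) :
    M →ₛₗ[((mapDomainRingEquiv F (MulAut.conjNormal g : N ≃* N) : F[N] ≃+* F[N]) :
      F[N] →+* F[N])] M where
  toFun m := of F G g • m
  map_add' := smul_add _
  map_smul' x m := by
    simp only [subgroup_smul_eq, smul_smul, of_mul_mapDomainRingHom]
    rfl

theorem groupSMulSemilinearMap_bijective (g : G) :
    Function.Bijective (groupSMulSemilinearMap F N M g) := by
  refine Function.bijective_iff_has_inverse.mpr ⟨(of F G g⁻¹ • ·), fun m => ?_, fun m => ?_⟩ <;>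
    simp [groupSMulSemilinearMap, smul_smul, ← one_def]

theorem of_smul_mem_moduleSocle (g : G) {m : M} (hm : m ∈ moduleSocle F[N] M) :
    of F G g • m ∈ moduleSocle F[N] M := by
  rw [← map_moduleSocle _ (groupSMulSemilinearMap_bijective g)]
  exact Submodule.mem_map_of_mem hm

variable [Module F M] [IsScalarTower F F[G] M] [IsScalarTower F F[N] M]

variable (F N M) in
noncomputable def subgroupSocle : Submodule F[G] M :=
  submoduleOfSMulMem ((moduleSocle F[N] M).restrictScalars F) fun g _ => of_smul_mem_moduleSocle g

theorem le_subgroupSocle [IsArtinian F[N] M] {S : Submodule F[G] M}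
    (hS : IsSimpleModule F[G] S) : S ≤ subgroupSocle F N M := by
  rw [isSimpleModule_iff_isAtom] at hS
  obtain ⟨Q, hQ, hQS⟩ := (eq_bot_or_exists_atom_le (S.restrictScalars F[N])).resolve_left
    (by simpa using hS.1)
  have hQV : Q ≤ (S ⊓ subgroupSocle F N M).restrictScalars F[N] :=
    le_inf hQS (le_sSup (isSimpleModule_iff_isAtom.2 hQ))
  have hne : S ⊓ subgroupSocle F N M ≠ ⊥ := fun h => hQ.1 (eq_bot_iff.2 (by simpa [h] using hQV))
  exact inf_eq_left.1 ((hS.le_iff.1 inf_le_left).resolve_left hne)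

theorem subgroupSocle_le_moduleSocle (hN : (N.index : F) ≠ 0) :
    subgroupSocle F N M ≤ moduleSocle F[G] M := by
  have : IsSemisimpleModule F[N] (subgroupSocle F N M) :=
    (isSemisimpleModule_moduleSocle (R := F[N]) (M := M)).congr
      { toFun x := ⟨x, x.2⟩, invFun x := ⟨x, x.2⟩, map_add' _ _ := rfl, map_smul' _ _ := rfl }
  have := isSemisimpleModule_of_subgroup hN (V := subgroupSocle F N M)
  exact le_moduleSocle _

end NormalSubgroup

end MonoidAlgebra

theorem socle_restriction_eq_socle_general
    (p : ℕ) (F : Type) [Field F] [CharP F p]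
    (G : Type) [Group G] (N : Subgroup G) [N.Normal]
    (hind : ¬ p ∣ N.index)
    (M : Type) [AddCommGroup M] [Module F M]
    [Module (MonoidAlgebra F G) M] [IsScalarTower F (MonoidAlgebra F G) M]
    [Module (MonoidAlgebra F N) M] [IsScalarTower F (MonoidAlgebra F N) M]
    [FiniteDimensional F M]
    (hcompat : ∀ (n : N) (m : M),
      MonoidAlgebra.of F N n • m = MonoidAlgebra.of F G (n : G) • m) :
    (moduleSocle (MonoidAlgebra F N) M : Set M) =
      (moduleSocle (MonoidAlgebra F G) M : Set M) := by
  have := isScalarTower_of_of_smul_eq hcompat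
  have : IsArtinian F[N] M := isArtinian_of_tower F inferInstance
  have hN : (N.index : F) ≠ 0 := mt (CharP.cast_eq_zero_iff F p _).mp hind
  change (subgroupSocle F N M : Set M) = _
  exact congrArg _ <| le_antisymm (subgroupSocle_le_moduleSocle hN)
    (sSup_le fun S hS => le_subgroupSocle hS)

/-- Let `F` have characteristic `p`, `G` a finite group and `N` a normal subgroup of `G`
of index not divisible by `p`.  For a finite-dimensional `F[G]`-module `M`, the socle
of `M` as an `F[N]`-module (via restriction, expressed by the compatibility hypothesis)
coincides, as a subset of `M`, with the socle of `M` as an `F[G]`-module. -/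
theorem socle_restriction_eq_socle
    (p : ℕ) (hp : p.Prime) (F : Type) [Field F] [CharP F p]
    (G : Type) [Group G] [Finite G] (N : Subgroup G) [N.Normal]
    (hind : ¬ p ∣ N.index)
    (M : Type) [AddCommGroup M] [Module F M]
    [Module (MonoidAlgebra F G) M] [IsScalarTower F (MonoidAlgebra F G) M]
    [Module (MonoidAlgebra F N) M] [IsScalarTower F (MonoidAlgebra F N) M]
    [FiniteDimensional F M]
    (hcompat : ∀ (n : N) (m : M),
      MonoidAlgebra.of F N n • m = MonoidAlgebra.of F G (n : G) • m) :
    (moduleSocle (MonoidAlgebra F N) M : Set M) =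
      (moduleSocle (MonoidAlgebra F G) M : Set M) :=
  socle_restriction_eq_socle_general p F G N hind M hcompat
end

section
/- Let p be a prime, H a finite group, and U a normal p-subgroup of H. Let M be a finite-dimensional complex representation of H whose character vanishes at every p-element g ≠ 1 of H (i.e., at every nonidentity element whose order is a power of p). Then the character of the H/U-representation M^U (the U-invariants, with the induced H/U-action) vanishes at every nonidentity p-element of H/U, and dim_ℂ M^U = dim_ℂ M / |U|. -/
/-!
Averaging over `U` is a projection of `M` onto `M^U`, so the trace of `hU` on `M^U` is the trace
of `ρ h` composed with that projection, namely `|U|⁻¹ ∑_{u ∈ U} χ(hu)`. If `hU` is a nonidentity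
`p`-element of `H/U`, every `hu` is a nonidentity `p`-element of `H` (an extension of a `p`-group
by a `p`-group is a `p`-group), so every term vanishes. For `h = 1` only `u = 1` survives, which
gives `dim M^U = χ(1) / |U|`.
-/

theorem IsPGroup.exists_orderOf_eq_pow_of_quotient {p : ℕ} [Fact p.Prime] {G : Type*} [Group G]
    {U : Subgroup G} [U.Normal] (hU : IsPGroup p U) {g : G}
    (hg : ∃ k, orderOf (g : G ⧸ U) = p ^ k) : ∃ k, orderOf g = p ^ k := by
  obtain ⟨k, hk⟩ := hg
  have hzpowers : IsPGroup p (Subgroup.zpowers (g : G ⧸ U)) :=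
    IsPGroup.of_card (n := k) (by rw [Nat.card_zpowers, hk])
  have hcomap := hzpowers.comap_of_ker_isPGroup (QuotientGroup.mk' U)
    (by rwa [QuotientGroup.ker_mk'])
  have hmem : g ∈ (Subgroup.zpowers (g : G ⧸ U)).comap (QuotientGroup.mk' U) :=
    Subgroup.mem_zpowers (g : G ⧸ U)
  obtain ⟨j, hj⟩ := IsPGroup.iff_orderOf.mp hcomap ⟨g, hmem⟩
  exact ⟨j, by rwa [Subgroup.orderOf_mk] at hj⟩

namespace LinearMap

variable {K M V : Type*} [Field K] [AddCommGroup M] [Module K M] [FiniteDimensional K M]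
  [AddCommGroup V] [Module K V] [FiniteDimensional K V]

theorem trace_eq_trace_comp_of_isProj {e : V →ₗ[K] M} (he : Function.Injective e)
    {P : M →ₗ[K] M} (hP : IsProj (range e) P) {f : V →ₗ[K] V} {A : M →ₗ[K] M}
    (hf : e ∘ₗ f = A ∘ₗ e) : trace K V f = trace K M (A ∘ₗ P) := by
  obtain ⟨r, hr⟩ := e.exists_leftInverse_of_injective (ker_eq_bot.mpr he)
  have hPe : P ∘ₗ e = e := ext fun v => hP.map_id _ ⟨v, rfl⟩
  have heP : e ∘ₗ r ∘ₗ P = P := by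
    ext m
    obtain ⟨v, hv⟩ := hP.map_mem m
    simp only [comp_apply, ← hv]
    exact congr(e ($hr v))
  calc trace K V f = trace K V ((f ∘ₗ r ∘ₗ P) ∘ₗ e) := by
        rw [comp_assoc, comp_assoc, hPe, hr, comp_id]
    _ = trace K M (e ∘ₗ f ∘ₗ r ∘ₗ P) := trace_comp_comm' _ _
    _ = trace K M (A ∘ₗ P) := by rw [← comp_assoc, hf, comp_assoc, heP]

end LinearMap

namespace Representation

theorem trace_comp_averageMap {k G M : Type*} [CommRing k] [Group G] [AddCommGroup M]
    [Module k M] [Fintype G] [Invertible (Fintype.card G : k)] (ρ : Representation k G M)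
    (A : M →ₗ[k] M) :
    LinearMap.trace k M (A ∘ₗ ρ.averageMap) =
      ⅟(Fintype.card G : k) * ∑ g : G, LinearMap.trace k M (A ∘ₗ ρ g) := by
  simp [GroupAlgebra.average, ← Module.End.mul_eq_comp, Finset.mul_sum, map_sum]

theorem trace_eq_sum_trace_mul_of_range_eq_invariants {K G M V : Type*} [Field K] [Group G]
    [AddCommGroup M] [Module K M] [FiniteDimensional K M]
    [AddCommGroup V] [Module K V] [FiniteDimensional K V]
    (ρ : Representation K G M) (U : Subgroup G) [Fintype U] [Invertible (Fintype.card U : K)]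
    {e : V →ₗ[K] M} (he : Function.Injective e)
    (hrange : LinearMap.range e = invariants (ρ.comp U.subtype))
    {f : V →ₗ[K] V} {g : G} (hf : e ∘ₗ f = ρ g ∘ₗ e) :
    LinearMap.trace K V f = ⅟(Fintype.card U : K) * ∑ u : U, LinearMap.trace K M (ρ (g * u)) := by
  have hP := hrange ▸ isProj_averageMap (ρ.comp U.subtype)
  rw [LinearMap.trace_eq_trace_comp_of_isProj he hP hf, trace_comp_averageMap (ρ.comp U.subtype)]
  simp [← Module.End.mul_eq_comp]

end Representation

/-- Let `U` be a normal `p`-subgroup of a finite group `H` and let `ρ` be a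
finite-dimensional complex representation of `H` whose character vanishes at every
nonidentity `p`-element of `H`.  Then the character of the induced `H/U`-representation
on the `U`-invariants (realized as the representation `ρ'` on `V`, identified with the
invariants via the `ℂ`-linear injection `e` intertwining the actions) vanishes at every
nonidentity `p`-element of `H/U`, and `dim M^U = dim M / |U|`. -/
theorem character_of_invariants_vanishes_on_p_elements
    (p : ℕ) (hp : p.Prime) (H : Type) [Group H] [Finite H]
    (U : Subgroup H) [U.Normal] (hU : IsPGroup p U)
    (M : Type) [AddCommGroup M] [Module ℂ M] [FiniteDimensional ℂ M]
    (ρ : Representation ℂ H M)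
    (hvan : ∀ g : H, g ≠ 1 → (∃ k, orderOf g = p ^ k) → LinearMap.trace ℂ M (ρ g) = 0)
    (V : Type) [AddCommGroup V] [Module ℂ V] [FiniteDimensional ℂ V]
    (ρ' : Representation ℂ (H ⧸ U) V)
    (e : V →ₗ[ℂ] M) (he : Function.Injective e)
    (hrange : Set.range e = {m : M | ∀ u : U, ρ u m = m})
    (hcompat : ∀ (h : H) (v : V), e (ρ' (QuotientGroup.mk h) v) = ρ h (e v)) :
    (∀ x : H ⧸ U, x ≠ 1 → (∃ k, orderOf x = p ^ k) → LinearMap.trace ℂ V (ρ' x) = 0) ∧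
      Module.finrank ℂ M = Nat.card U * Module.finrank ℂ V := by
  have : Fact p.Prime := ⟨hp⟩
  have := Fintype.ofFinite U
  have : Invertible (Fintype.card U : ℂ) :=
    invertibleOfNonzero (Nat.cast_ne_zero.mpr Fintype.card_ne_zero)
  have hrange' : LinearMap.range e = Representation.invariants (ρ.comp U.subtype) :=
    SetLike.coe_injective (by rw [LinearMap.coe_range, hrange]; rfl)
  have key (h : H) : LinearMap.trace ℂ V (ρ' h) =
      ⅟(Fintype.card U : ℂ) * ∑ u : U, LinearMap.trace ℂ M (ρ (h * u)) :=
    ρ.trace_eq_sum_trace_mul_of_range_eq_invariants U he hrange' (LinearMap.ext (hcompat h))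
  refine ⟨fun x hx hxp => ?_, ?_⟩
  · obtain ⟨h, rfl⟩ := QuotientGroup.mk_surjective x
    rw [key, Finset.sum_eq_zero, mul_zero]
    intro u _
    have hmk : ((h * u : H) : H ⧸ U) = h := QuotientGroup.mk_mul_of_mem h u.2
    refine hvan _ (fun h1 => hx ?_) (hU.exists_orderOf_eq_pow_of_quotient (hmk ▸ hxp))
    rw [← hmk, h1, QuotientGroup.mk_one]
  · have hsum : ∑ u : U, LinearMap.trace ℂ M (ρ (1 * u)) = Module.finrank ℂ M := by
      rw [Finset.sum_eq_single 1 (fun u _ hu => ?_) (by simp)]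
      · simp
      · rw [one_mul]
        obtain ⟨k, hk⟩ := IsPGroup.iff_orderOf.mp hU u
        exact hvan u (by simpa using hu) ⟨k, by rw [Subgroup.orderOf_coe, hk]⟩
    have hdim := key 1
    rw [QuotientGroup.mk_one, map_one, LinearMap.trace_one, hsum] at hdim
    have hcard : (Fintype.card U : ℂ) * Module.finrank ℂ V = Module.finrank ℂ M := by
      rw [hdim, mul_invOf_cancel_left]
    rw [Nat.card_eq_fintype_card]
    exact_mod_cast hcard.symm
end

section
/- Let ℓ be an odd prime and n ≥ 4 an integer. Let W be the subgroup of GL(n, 𝔽_ℓ) consisting of all matrices of the form P·D where P is a permutation matrix and D is a diagonal matrix with all diagonal entries equal to 1 or −1 and det D = 1 (i.e., an even number of entries equal to −1); so |W| = 2^{n−1} · n!. Then for every nonzero vector v ∈ 𝔽_ℓ^n, the orbit {w·v : w ∈ W} has at least 2n elements. -/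
/-!
The orbit contains `(d * v) ∘ σ` for every permutation `σ` and every sign vector `d` with an
even number of `-1`s. If no entry of `v` vanishes, the `2 ^ (n - 1)` even sign changes of `v`
are pairwise distinct (as `-a ≠ a` for `a ≠ 0` in characteristic `≠ 2`), and
`2 ^ (n - 1) ≥ 2 * n` for `n ≥ 4`. Otherwise the support of `v` is a proper nonempty subset, of
size `m` say; permutations move it onto each of the `C(n, m) ≥ n` subsets of size `m`, and
negating a nonzero entry together with a zero entry gives a second vector with the same support.
-/

open Finset Matrix

theorem Nat.self_le_choose {n m : ℕ} (hm : 0 < m) (hmn : m < n) : n ≤ n.choose m := by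
  induction n generalizing m with
  | zero => omega
  | succ k ih =>
    obtain ⟨j, rfl⟩ := Nat.exists_eq_add_of_lt hm
    rw [zero_add, Nat.choose_succ_succ']
    rcases Nat.eq_zero_or_pos j with rfl | hj
    · simp [add_comm]
    · have := ih hj (by omega)
      have := Nat.choose_pos (n := k) (k := j + 1) (by omega)
      omega

theorem Nat.two_mul_le_two_pow_sub_one {n : ℕ} (hn : 4 ≤ n) : 2 * n ≤ 2 ^ (n - 1) := by
  induction n, hn using Nat.le_induction with
  | base => norm_num
  | succ k hk ih =>
    rw [show k + 1 - 1 = k - 1 + 1 by omega, pow_succ]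
    omega

variable {ι R : Type*} [Fintype ι] [DecidableEq ι] [CommRing R]

lemma Matrix.permMatrix_mul_diagonal_mulVec (σ : Equiv.Perm ι) (d v : ι → R) :
    (σ.permMatrix R * diagonal d) *ᵥ v = (d * v) ∘ σ := by
  rw [← mulVec_mulVec, permMatrix_mulVec]
  congr 1
  ext i
  simp [mulVec_diagonal]

def evenSignedPermOrbit (v : ι → R) : Set (ι → R) :=
  {x | ∃ (σ : Equiv.Perm ι) (d : ι → R), (∀ i, d i = 1 ∨ d i = -1) ∧
    (diagonal d).det = 1 ∧ x = (σ.permMatrix R * diagonal d) *ᵥ v}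

variable (R) in
def signVector (T : Finset ι) : ι → R := fun i => if i ∈ T then -1 else 1

section signVector

omit [Fintype ι] in
lemma signVector_eq_one_or_eq_neg_one (T : Finset ι) (i : ι) :
    signVector R T i = 1 ∨ signVector R T i = -1 := by
  unfold signVector; split_ifs <;> simp

lemma prod_signVector (T : Finset ι) : ∏ i, signVector R T i = (-1) ^ #T := by
  simp [signVector, Finset.prod_ite_mem]

omit [Fintype ι] in
lemma signVector_mul_apply_ne_zero_iff {T : Finset ι} {v : ι → R} {i : ι} :
    (signVector R T * v) i ≠ 0 ↔ v i ≠ 0 := by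
  simp only [Pi.mul_apply, signVector]; split_ifs <;> simp

omit [Fintype ι] in
lemma mem_iff_of_signVector_mul_apply_eq [IsDomain R] (hR : ringChar R ≠ 2)
    {T T' : Finset ι} {v : ι → R} {i : ι} (hv : v i ≠ 0)
    (h : (signVector R T * v) i = (signVector R T' * v) i) : i ∈ T ↔ i ∈ T' := by
  have hneg : -v i ≠ v i := mt (Ring.eq_self_iff_eq_zero_of_char_ne_two hR).mp hv
  simp only [Pi.mul_apply, signVector] at h
  split_ifs at h <;> simp_all [eq_comm]

end signVector

namespace evenSignedPermOrbit

variable {v : ι → R}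

lemma signVector_mul_comp_mem {T : Finset ι} (hT : Even #T) (σ : Equiv.Perm ι) :
    (signVector R T * v) ∘ σ ∈ evenSignedPermOrbit v :=
  ⟨σ, signVector R T, signVector_eq_one_or_eq_neg_one T, by
    rw [det_diagonal, prod_signVector, hT.neg_one_pow],
    (permMatrix_mul_diagonal_mulVec σ _ v).symm⟩

lemma finite (v : ι → R) : (evenSignedPermOrbit v).Finite := by
  refine (Set.Finite.pi fun _ => (Set.finite_range v).union (Set.finite_range (-v))).subset ?_
  rintro _ ⟨σ, d, hd, -, rfl⟩ i -
  rw [permMatrix_mul_diagonal_mulVec]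
  rcases hd (σ i) with h | h <;> simp [h]

variable [IsDomain R]

lemma two_pow_le_ncard_of_forall_ne_zero (hR : ringChar R ≠ 2) [Nonempty ι]
    (hv : ∀ i, v i ≠ 0) : 2 ^ (Fintype.card ι - 1) ≤ (evenSignedPermOrbit v).ncard := by
  obtain ⟨j⟩ := ‹Nonempty ι›
  -- flipping `j` as well corrects the parity of a set of sign changes avoiding `j`
  let evenize : Finset ι → Finset ι := fun T => if Even #T then T else insert j T
  have evenize_even : ∀ T, j ∉ T → Even #(evenize T) := by
    intro T hj
    unfold evenize
    split_ifs with h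
    · exact h
    · rw [card_insert_of_notMem hj]
      exact Nat.even_add_one.mpr h
  have erase_evenize : ∀ T, j ∉ T → (evenize T).erase j = T := by
    intro T hj
    unfold evenize
    split_ifs <;> simp [erase_eq_of_notMem hj, erase_insert hj]
  have hnotMem : ∀ T ∈ ((univ.erase j).powerset : Set (Finset ι)), j ∉ T :=
    fun T hT hjT => (mem_erase.mp (mem_powerset.mp hT hjT)).1 rfl
  have hpow : ((univ.erase j).powerset : Set (Finset ι)).ncard = 2 ^ (Fintype.card ι - 1) := by
    rw [Set.ncard_coe_finset, card_powerset, card_erase_of_mem (mem_univ j), card_univ]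
  rw [← hpow]
  refine Set.ncard_le_ncard_of_injOn (fun T => signVector R (evenize T) * v) ?_ ?_ (finite v)
  · intro T hT
    exact signVector_mul_comp_mem (evenize_even T (hnotMem T hT)) 1
  · intro T hT T' hT' h
    rw [← erase_evenize T (hnotMem T hT), ← erase_evenize T' (hnotMem T' hT')]
    congr 1
    ext i
    exact mem_iff_of_signVector_mul_apply_eq hR (hv i) (congrFun h i)

lemma two_mul_choose_le_ncard_of_apply_eq_zero [DecidableEq R] (hR : ringChar R ≠ 2) {j k : ι}
    (hj : v j ≠ 0) (hk : v k = 0) :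
    2 * (Fintype.card ι).choose #{i | v i ≠ 0} ≤ (evenSignedPermOrbit v).ncard := by
  set s : Finset ι := {i | v i ≠ 0} with hs
  have hjk : j ≠ k := by rintro rfl; exact hj hk
  have hσ : ∀ T ∈ powersetCard #s univ, ∃ σ : Equiv.Perm ι, T.map σ.toEmbedding = s :=
    fun T hT => Equiv.Perm.exists_map_finset_eq T s (mem_powersetCard.mp hT).2
  choose! σ hσ using hσ
  let flips : Bool → Finset ι := fun b => if b then {j, k} else ∅
  have hsupp : ∀ T ∈ powersetCard #s univ, ∀ b i,
      ((signVector R (flips b) * v) ∘ σ T) i ≠ 0 ↔ i ∈ T := by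
    intro T hT b i
    rw [Function.comp_apply, signVector_mul_apply_ne_zero_iff,
      show v (σ T i) ≠ 0 ↔ σ T i ∈ s by simp [hs], ← hσ T hT]
    simp
  have hcard : ((powersetCard #s univ ×ˢ univ : Finset (Finset ι × Bool)) :
      Set (Finset ι × Bool)).ncard = 2 * (Fintype.card ι).choose #s := by
    rw [Set.ncard_coe_finset, card_product, card_powersetCard, card_univ, card_univ,
      Fintype.card_bool, mul_comm]
  rw [← hcard]
  refine Set.ncard_le_ncard_of_injOn (fun p => (signVector R (flips p.2) * v) ∘ σ p.1) ?_ ?_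
    (finite v)
  · rintro ⟨T, b⟩ -
    apply signVector_mul_comp_mem
    cases b <;> simp [flips, hjk]
  · rintro ⟨T, b⟩ hT ⟨T', b'⟩ hT' h
    simp only [coe_product, Set.mem_prod, mem_coe] at hT hT' h
    have hTT : T = T' := by
      ext i
      rw [← hsupp T hT.1 b i, ← hsupp T' hT'.1 b' i, h]
    subst hTT
    have hb := mem_iff_of_signVector_mul_apply_eq hR hj
      (congrFun ((σ T).surjective.injective_comp_right h) j)
    cases b <;> cases b' <;> simp_all [flips]

lemma two_mul_card_le_ncard_of_apply_eq_zero (hR : ringChar R ≠ 2) {j k : ι} (hj : v j ≠ 0)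
    (hk : v k = 0) : 2 * Fintype.card ι ≤ (evenSignedPermOrbit v).ncard := by
  classical
  have hpos : 0 < #{i | v i ≠ 0} := card_pos.mpr ⟨j, by simpa using hj⟩
  have hlt : #{i | v i ≠ 0} < Fintype.card ι :=
    card_lt_univ_of_notMem (x := k) (by simpa using hk)
  calc 2 * Fintype.card ι ≤ 2 * (Fintype.card ι).choose #{i | v i ≠ 0} :=
        Nat.mul_le_mul_left 2 (Nat.self_le_choose hpos hlt)
    _ ≤ (evenSignedPermOrbit v).ncard := two_mul_choose_le_ncard_of_apply_eq_zero hR hj hk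

lemma two_mul_card_le_ncard_of_forall_ne_zero (hR : ringChar R ≠ 2) (h4 : 4 ≤ Fintype.card ι)
    (hv : ∀ i, v i ≠ 0) : 2 * Fintype.card ι ≤ (evenSignedPermOrbit v).ncard :=
  have : Nonempty ι := Fintype.card_pos_iff.mp (by omega)
  (Nat.two_mul_le_two_pow_sub_one h4).trans (two_pow_le_ncard_of_forall_ne_zero hR hv)

lemma two_mul_card_le_ncard (hR : ringChar R ≠ 2) (h4 : 4 ≤ Fintype.card ι) (hv : v ≠ 0) :
    2 * Fintype.card ι ≤ (evenSignedPermOrbit v).ncard := by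
  obtain ⟨j, hj⟩ := Function.ne_iff.mp hv
  by_cases hzero : ∃ k, v k = 0
  · obtain ⟨k, hk⟩ := hzero
    exact two_mul_card_le_ncard_of_apply_eq_zero hR hj hk
  · exact two_mul_card_le_ncard_of_forall_ne_zero hR h4 (not_exists.mp hzero)

end evenSignedPermOrbit

/-- For an odd prime `ℓ` and `n ≥ 4`, the orbit of any nonzero vector of `𝔽_ℓ^n` under
the group of even-signed permutation matrices (products `P * D` of a permutation matrix
`P` and a diagonal matrix `D` with entries `±1` and `det D = 1`), acting by
matrix-vector multiplication, has at least `2n` elements. -/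
theorem even_signed_perm_orbit_ge
    (ℓ n : ℕ) (hl : ℓ.Prime) (hodd : Odd ℓ) (hn : 4 ≤ n)
    (v : Fin n → ZMod ℓ) (hv : v ≠ 0) :
    2 * n ≤ Set.ncard {x : Fin n → ZMod ℓ |
      ∃ (σ : Equiv.Perm (Fin n)) (d : Fin n → ZMod ℓ),
        (∀ i, d i = 1 ∨ d i = -1) ∧ (Matrix.diagonal d).det = 1 ∧
        x = (σ.permMatrix (ZMod ℓ) * Matrix.diagonal d).mulVec v} := by
  have : Fact ℓ.Prime := ⟨hl⟩
  have hR : ringChar (ZMod ℓ) ≠ 2 := by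
    rw [ZMod.ringChar_zmod_n]
    rintro rfl
    exact Nat.not_odd_iff_even.mpr even_two hodd
  have h := evenSignedPermOrbit.two_mul_card_le_ncard hR ((Fintype.card_fin n).symm ▸ hn) hv
  rw [Fintype.card_fin] at h
  exact h
end

section
/- Let q be a prime power and let n ≥ 5. Let T = {(t_1, …, t_n) ∈ (𝔽_qˣ)^n : t_1 t_2 ⋯ t_n = 1}, on which the symmetric group S_n acts by permuting coordinates, inducing an action on group homomorphisms β : T → ℂˣ by (σ·β)(t) = β(σ⁻¹·t). Then for every nontrivial group homomorphism β : T → ℂˣ, the orbit {σ·β : σ ∈ S_n} has at least n elements. -/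
/-! The orbit of `β` has size `[S_n : Stab β]`. If this index were `< n`, the normal core of
`Stab β`, being the kernel of the action of `S_n` on fewer than `n` cosets, would have index
dividing `(n - 1)!`, hence be nontrivial; for `n ≥ 5` it then contains `A_n`. But `A_n` is
2-transitive, so an `A_n`-invariant character takes a single value `c` on all the elements
`e_i(x) / e_j(x)` with `i ≠ j`; the relation `(e_i/e_j)(e_j/e_k) = e_i/e_k` gives `c² = c`, so
`c = 1`, and these elements generate `T`. -/

/-- The subgroup `T` of `(Kˣ)^n` of tuples whose product is `1`. -/
def prodOneSubgroup (n : ℕ) (K : Type) [Field K] : Subgroup (Fin n → Kˣ) where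
  carrier := {t | ∏ i, t i = 1}
  mul_mem' := by
    intro a b ha hb
    simp only [Set.mem_setOf_eq, Pi.mul_apply, Finset.prod_mul_distrib] at *
    rw [ha, hb, mul_one]
  one_mem' := by simp
  inv_mem' := by
    intro a ha
    simp only [Set.mem_setOf_eq, Pi.inv_apply] at *
    rw [Finset.prod_inv_distrib, ha, inv_one]

/-- The action of a permutation `σ ∈ S_n` on `T`, given by `(σ·t) i = t (σ⁻¹ i)`. -/
def permAction (n : ℕ) (K : Type) [Field K] (σ : Equiv.Perm (Fin n)) :
    prodOneSubgroup n K →* prodOneSubgroup n K where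
  toFun t := ⟨fun i => (t : Fin n → Kˣ) (σ⁻¹ i), by
    have ht : ∏ i, (t : Fin n → Kˣ) i = 1 := t.2
    calc ∏ i, (t : Fin n → Kˣ) (σ⁻¹ i) = ∏ i, (t : Fin n → Kˣ) i :=
          Equiv.prod_comp σ⁻¹ _
      _ = 1 := ht⟩
  map_one' := rfl
  map_mul' t s := rfl

open Equiv MulAction
open scoped Nat

theorem Subgroup.index_normalCore_dvd_index_factorial {G : Type*} [Group G] (H : Subgroup G)
    [H.FiniteIndex] : H.normalCore.index ∣ H.index ! := by
  rw [normalCore_eq_ker, index_ker, index_eq_card, ← Nat.card_perm]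
  exact card_subgroup_dvd_card _

theorem Equiv.Perm.alternatingGroup_le_of_index_lt {α : Type*} [Fintype α] [DecidableEq α]
    (hα : 5 ≤ Nat.card α) {H : Subgroup (Perm α)} (hH : H.index < Nat.card α) :
    alternatingGroup α ≤ H := by
  refine le_trans (alternatingGroup_le_of_normal hα ?_) H.normalCore_le
  rw [Subgroup.nontrivial_iff_ne_bot]
  intro hbot
  have hdvd := H.index_normalCore_dvd_index_factorial
  rw [hbot, Subgroup.index_bot, Nat.card_perm] at hdvd
  have hle : (Nat.card α)! ≤ H.index ! := Nat.le_of_dvd (Nat.factorial_pos _) hdvd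
  have hlt : H.index ! < (Nat.card α)! :=
    (Nat.factorial_lt (Nat.pos_of_ne_zero H.index_ne_zero_of_finite)).mpr hH
  exact hlt.not_ge hle

namespace prodOneSubgroup

variable {n : ℕ} {K : Type} [Field K]

def mulSingleDiv (i j : Fin n) (x : Kˣ) : prodOneSubgroup n K :=
  ⟨Pi.mulSingle i x / Pi.mulSingle j x, by
    change ∏ l, (Pi.mulSingle i x / Pi.mulSingle j x : Fin n → Kˣ) l = 1
    simp only [Pi.div_apply, Finset.prod_div_distrib, Fintype.prod_pi_mulSingle', div_self']⟩

@[simp]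
theorem mulSingleDiv_self (i : Fin n) (x : Kˣ) : mulSingleDiv (K := K) i i x = 1 :=
  Subtype.ext (div_self' _)

theorem mulSingleDiv_mul_mulSingleDiv (i j k : Fin n) (x : Kˣ) :
    mulSingleDiv (K := K) i j x * mulSingleDiv j k x = mulSingleDiv i k x :=
  Subtype.ext (div_mul_div_cancel _ _ _)

theorem permAction_mulSingleDiv (σ : Perm (Fin n)) (i j : Fin n) (x : Kˣ) :
    permAction n K σ (mulSingleDiv i j x) = mulSingleDiv (σ i) (σ j) x := by
  ext l
  simp [permAction, mulSingleDiv, Pi.mulSingle_apply, Perm.inv_def, Equiv.symm_apply_eq]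

theorem prod_mulSingleDiv (b : Fin n) (t : prodOneSubgroup n K) :
    ∏ i, mulSingleDiv i b ((t : Fin n → Kˣ) i) = t := by
  have hb : ∏ i, (Pi.mulSingle b ((t : Fin n → Kˣ) i) : Fin n → Kˣ) = 1 := by
    have ht : ∏ i, (t : Fin n → Kˣ) i = 1 := t.2
    simpa [ht] using (map_prod (MonoidHom.mulSingle (fun _ => Kˣ) b) (t : Fin n → Kˣ) .univ).symm
  ext1
  simp only [Subgroup.val_finsetProd, mulSingleDiv, Finset.prod_div_distrib,
    Finset.univ_prod_mulSingle, hb, div_one]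

theorem hom_ext_mulSingleDiv {M : Type*} [CommMonoid M] {γ δ : prodOneSubgroup n K →* M}
    (h : ∀ i j x, γ (mulSingleDiv i j x) = δ (mulSingleDiv i j x)) : γ = δ := by
  ext t
  rcases isEmpty_or_nonempty (Fin n) with hn | hn
  · rw [Subsingleton.elim t 1, map_one, map_one]
  · obtain ⟨b⟩ := hn
    rw [← prod_mulSingleDiv b t, map_prod, map_prod]
    exact Finset.prod_congr rfl fun i _ => h _ _ _

variable {M : Type*} [CommGroup M]

instance : MulAction (Perm (Fin n)) (prodOneSubgroup n K →* M) where
  smul σ β := β.comp (permAction n K σ⁻¹)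
  one_smul _ := rfl
  mul_smul _ _ _ := rfl

theorem smul_def (σ : Perm (Fin n)) (β : prodOneSubgroup n K →* M) :
    σ • β = β.comp (permAction n K σ⁻¹) := rfl

theorem apply_permAction_of_mem_stabilizer {β : prodOneSubgroup n K →* M} {σ : Perm (Fin n)}
    (hσ : σ ∈ stabilizer (Perm (Fin n)) β) (t : prodOneSubgroup n K) :
    β (permAction n K σ t) = β t := by
  have hσ' : σ⁻¹ • β = β := inv_mem hσ
  rw [smul_def, inv_inv] at hσ'
  exact DFunLike.congr_fun hσ' t

theorem eq_one_of_alternatingGroup_le_stabilizer (hn : 4 ≤ n) {β : prodOneSubgroup n K →* M}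
    (hβ : alternatingGroup (Fin n) ≤ stabilizer (Perm (Fin n)) β) : β = 1 := by
  have htrans : IsMultiplyPretransitive (alternatingGroup (Fin n)) (Fin n) 2 := by
    have := alternatingGroup.isMultiplyPretransitive (Fin n)
    exact isMultiplyPretransitive_of_le (n := Nat.card (Fin n) - 2) (by simp; omega) (by simp)
  have hconst : ∀ x {i j k l : Fin n}, i ≠ j → k ≠ l →
      β (mulSingleDiv k l x) = β (mulSingleDiv i j x) := by
    intro x i j k l hij hkl
    obtain ⟨σ, rfl, rfl⟩ := is_two_pretransitive_iff.mp htrans hij hkl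
    exact (congrArg β (permAction_mulSingleDiv σ i j x)).symm.trans
      (apply_permAction_of_mem_stabilizer (hβ σ.2) _)
  refine hom_ext_mulSingleDiv fun i j x => ?_
  rw [MonoidHom.one_apply]
  rcases eq_or_ne i j with rfl | hij
  · simp
  obtain ⟨k, hki, hkj⟩ := Fin.exists_ne_and_ne_of_two_lt i j (by omega)
  have htriangle := congrArg β (mulSingleDiv_mul_mulSingleDiv i j k x)
  rw [map_mul, hconst x hij hki.symm, hconst x hij hkj.symm] at htriangle
  exact mul_eq_left.mp htriangle

end prodOneSubgroup

theorem orbit_of_nontrivial_character_ge_general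
    (n : ℕ) (hn : 5 ≤ n)
    (K : Type) [Field K]
    (β : prodOneSubgroup n K →* ℂˣ) (hβ : β ≠ 1) :
    n ≤ Set.ncard
      (Set.range fun σ : Equiv.Perm (Fin n) => β.comp (permAction n K σ⁻¹)) := by
  by_contra! hlt
  have hindex : (stabilizer (Perm (Fin n)) β).index < Nat.card (Fin n) := by
    rwa [index_stabilizer, Nat.card_fin]
  exact hβ (prodOneSubgroup.eq_one_of_alternatingGroup_le_stabilizer (by omega)
    (Perm.alternatingGroup_le_of_index_lt (by simpa using hn) hindex))

/-- For a finite field `K` with `q` elements and `n ≥ 5`, the `S_n`-orbit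
`{σ·β}` (where `(σ·β)(t) = β(σ⁻¹·t)`) of any nontrivial complex character `β` of the
group `T` of tuples in `(Kˣ)^n` of product `1` has at least `n` elements. -/
theorem orbit_of_nontrivial_character_ge
    (q n : ℕ) (hn : 5 ≤ n)
    (K : Type) [Field K] [Fintype K] (hK : Fintype.card K = q)
    (β : prodOneSubgroup n K →* ℂˣ) (hβ : β ≠ 1) :
    n ≤ Set.ncard
      (Set.range fun σ : Equiv.Perm (Fin n) => β.comp (permAction n K σ⁻¹)) :=
  orbit_of_nontrivial_character_ge_general n hn K β hβ
end

section
/- Let n ≥ 1 and m ≥ 2 be integers and let W be a subgroup of GL(n, ℤ). W acts on (ℤ/mℤ)^n via reduction of matrix entries modulo m. Then there exists a nontrivial group homomorphism χ : (ℤ/mℤ)^n → ℂˣ satisfying χ(w·x) = χ(x) for all w ∈ W and x ∈ (ℤ/mℤ)^n if and only if there exist a prime ℓ dividing m and a nonzero vector v ∈ (ℤ/ℓℤ)^n such that (w mod ℓ)ᵀ · v = v for all w ∈ W, where (w mod ℓ)ᵀ denotes the transpose of the reduction of w modulo ℓ. -/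
/-!
Fix a primitive character `ψ` of `ZMod m` with values in `ℂˣ`. Every character of
`(ZMod m)^n` is `x ↦ ψ (a ⬝ᵥ x)` for a unique `a`: these are distinct by primitivity, and there
are no more than `m^n` characters. Precomposing with `w` turns `a` into `wᵀ a`, so nontrivial
invariant characters are nonzero common fixed vectors of the transposes mod `m`.
A nonzero fixed vector mod `m` has a multiple of prime order `ℓ ∣ m`, still fixed, and the
`ℓ`-torsion of `ZMod m` is a copy of `ZMod ℓ` (via `1 ↦ m / ℓ`) on which integer matrices act
compatibly; conversely this copy carries fixed vectors mod `ℓ` to fixed vectors mod `m`.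
-/

open Matrix

namespace AddChar

variable {R M ι : Type*} [CommRing R] [CommMonoid M] [Fintype ι]

def compDotProduct (ψ : AddChar R M) (a : ι → R) : AddChar (ι → R) M :=
  ψ.compAddMonoidHom (dotProductBilin R R a).toAddMonoidHom

@[simp]
lemma compDotProduct_apply (ψ : AddChar R M) (a x : ι → R) :
    ψ.compDotProduct a x = ψ (a ⬝ᵥ x) :=
  rfl

@[simp]
lemma compDotProduct_zero (ψ : AddChar R M) : ψ.compDotProduct (0 : ι → R) = 1 := by
  ext x
  simp

lemma compDotProduct_apply_mulVec (ψ : AddChar R M) (a : ι → R) (A : Matrix ι ι R)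
    (x : ι → R) : ψ.compDotProduct a (A *ᵥ x) = ψ.compDotProduct (Aᵀ *ᵥ a) x := by
  rw [compDotProduct_apply, compDotProduct_apply, dotProduct_mulVec, mulVec_transpose]

lemma compDotProduct_injective [DecidableEq ι] {ψ : AddChar R M} (hψ : ψ.IsPrimitive) :
    Function.Injective (ψ.compDotProduct : (ι → R) → AddChar (ι → R) M) := by
  intro a b hab
  funext i
  refine to_mulShift_inj_of_isPrimitive hψ (ext _ _ fun r ↦ ?_)
  simpa using DFunLike.congr_fun hab (Pi.single i r)

lemma natCard_complexUnits_le {G : Type*} [AddCommGroup G] [Finite G] :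
    Nat.card (AddChar G ℂˣ) ≤ Nat.card G := by
  have : Fintype G := Fintype.ofFinite G
  calc Nat.card (AddChar G ℂˣ)
      ≤ Nat.card (AddChar G ℂ) :=
        Nat.card_le_card_of_injective _
          ((Units.coeHom ℂ).compAddChar_injective_right Units.val_injective)
    _ = Nat.card G := by simp [Nat.card_eq_fintype_card]

lemma compDotProduct_bijective [Finite R] [DecidableEq ι] {ψ : AddChar R ℂˣ}
    (hψ : ψ.IsPrimitive) :
    Function.Bijective (ψ.compDotProduct : (ι → R) → AddChar (ι → R) ℂˣ) :=
  have : Finite (AddChar (ι → R) ℂˣ) :=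
    .of_injective _ ((Units.coeHom ℂ).compAddChar_injective_right Units.val_injective)
  (compDotProduct_injective hψ).bijective_of_nat_card_le natCard_complexUnits_le

end AddChar

lemma ZMod.isPrimitive_toUnits_compAddChar_toCircle (N : ℕ) [NeZero N] :
    (Circle.toUnits.compAddChar (ZMod.toCircle (N := N))).IsPrimitive :=
  AddChar.zmod_char_primitive_of_eq_one_only_at_zero _ _ fun a ha ↦
    ZMod.injective_toCircle <| by
      simpa [Units.ext_iff, Circle.ext_iff] using ha

open AddChar in
theorem exists_invariant_addChar_iff_transpose_fixed_vector {R ι : Type*} [CommRing R]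
    [Finite R] [Fintype ι] [DecidableEq ι] {ψ : AddChar R ℂˣ} (hψ : ψ.IsPrimitive)
    (S : Set (Matrix ι ι R)) :
    (∃ χ : AddChar (ι → R) ℂˣ, χ ≠ 1 ∧ ∀ A ∈ S, ∀ x, χ (A *ᵥ x) = χ x) ↔
      ∃ a : ι → R, a ≠ 0 ∧ ∀ A ∈ S, Aᵀ *ᵥ a = a := by
  have hinj := compDotProduct_injective (ι := ι) hψ
  have invariant_iff (a : ι → R) (A : Matrix ι ι R) :
      (∀ x, ψ.compDotProduct a (A *ᵥ x) = ψ.compDotProduct a x) ↔ Aᵀ *ᵥ a = a := by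
    simp only [compDotProduct_apply_mulVec, ← DFunLike.ext_iff, hinj.eq_iff]
  have ne_one_iff (a : ι → R) : ψ.compDotProduct a ≠ 1 ↔ a ≠ 0 := by
    rw [← compDotProduct_zero ψ, hinj.ne_iff]
  rw [(compDotProduct_bijective hψ).surjective.exists]
  simp only [ne_one_iff, invariant_iff]

lemma IsOfFinAddOrder.exists_addOrderOf_nsmul_eq_prime {G : Type*} [AddMonoid G] {a : G}
    (hfin : IsOfFinAddOrder a) (ha : a ≠ 0) :
    ∃ ℓ : ℕ, ℓ.Prime ∧ ℓ ∣ addOrderOf a ∧ ∃ k : ℕ, addOrderOf (k • a) = ℓ := by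
  obtain ⟨ℓ, hℓ, hdvd⟩ := Nat.exists_prime_and_dvd (mt AddMonoid.addOrderOf_eq_one_iff.mp ha)
  exact ⟨ℓ, hℓ, hdvd, _, addOrderOf_nsmul_addOrderOf_sub hfin.addOrderOf_pos.ne' hdvd⟩

namespace ZMod

variable {ℓ m : ℕ}

def mulDivHom (h : ℓ ∣ m) : ZMod ℓ →+ ZMod m :=
  ZMod.lift ℓ ⟨zmultiplesHom (ZMod m) ((m / ℓ : ℕ) : ZMod m), by
    simp [← Nat.cast_mul, Nat.mul_div_cancel' h]⟩

lemma mulDivHom_intCast (h : ℓ ∣ m) (t : ℤ) :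
    mulDivHom h t = t * ((m / ℓ : ℕ) : ZMod m) := by
  simp [mulDivHom]

lemma mulDivHom_injective (h : ℓ ∣ m) (hm : m ≠ 0) : Function.Injective (mulDivHom h) := by
  obtain ⟨q, rfl⟩ := h
  have hℓ : 0 < ℓ := Nat.pos_of_ne_zero (left_ne_zero_of_mul hm)
  have hq : (q : ℤ) ≠ 0 := by exact_mod_cast right_ne_zero_of_mul hm
  refine (injective_iff_map_eq_zero _).mpr fun x hx ↦ ?_
  obtain ⟨t, rfl⟩ := ZMod.intCast_surjective x
  rw [mulDivHom_intCast, Nat.mul_div_cancel_left q hℓ, ← Int.cast_natCast, ← Int.cast_mul,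
    ZMod.intCast_zmod_eq_zero_iff_dvd] at hx
  rw [ZMod.intCast_zmod_eq_zero_iff_dvd]
  push_cast at hx
  exact (mul_dvd_mul_iff_right hq).mp hx

lemma exists_mulDivHom_eq_of_nsmul_eq_zero (h : ℓ ∣ m) (hm : m ≠ 0) {x : ZMod m}
    (hx : ℓ • x = 0) : ∃ y, mulDivHom h y = x := by
  obtain ⟨q, rfl⟩ := h
  have hℓ : 0 < ℓ := Nat.pos_of_ne_zero (left_ne_zero_of_mul hm)
  obtain ⟨t, rfl⟩ := ZMod.intCast_surjective x
  rw [nsmul_eq_mul, ← Int.cast_natCast, ← Int.cast_mul, ZMod.intCast_zmod_eq_zero_iff_dvd] at hx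
  push_cast at hx
  obtain ⟨s, rfl⟩ := (mul_dvd_mul_iff_left (by exact_mod_cast hℓ.ne')).mp hx
  exact ⟨s, by rw [mulDivHom_intCast, Nat.mul_div_cancel_left q hℓ]; push_cast; ring⟩

end ZMod

namespace AddMonoidHom

variable {R S ι : Type*} [Ring R] [Ring S] [Fintype ι]

lemma map_intCast_mulVec (f : R →+ S) (A : Matrix ι ι ℤ) (v : ι → R) :
    f ∘ (A.map (Int.cast : ℤ → R) *ᵥ v) = A.map (Int.cast : ℤ → S) *ᵥ (f ∘ v) := by
  ext i
  simp [mulVec, dotProduct, map_sum, ← zsmul_eq_mul]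

lemma intCast_mulVec_comp_eq_self_iff {f : R →+ S} (hf : Function.Injective f)
    (A : Matrix ι ι ℤ) (v : ι → R) :
    A.map (Int.cast : ℤ → S) *ᵥ (f ∘ v) = f ∘ v ↔ A.map (Int.cast : ℤ → R) *ᵥ v = v := by
  rw [← f.map_intCast_mulVec, hf.comp_left.eq_iff]

end AddMonoidHom

theorem exists_fixed_vector_zmod_iff_exists_prime_dvd {ι : Type*} [Fintype ι] {m : ℕ}
    (hm : m ≠ 0) (S : Set (Matrix ι ι ℤ)) :
    (∃ a : ι → ZMod m, a ≠ 0 ∧ ∀ A ∈ S, A.map (Int.cast : ℤ → ZMod m) *ᵥ a = a) ↔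
      ∃ ℓ : ℕ, ℓ.Prime ∧ ℓ ∣ m ∧ ∃ v : ι → ZMod ℓ, v ≠ 0 ∧
        ∀ A ∈ S, A.map (Int.cast : ℤ → ZMod ℓ) *ᵥ v = v := by
  have : NeZero m := ⟨hm⟩
  constructor
  · rintro ⟨a, ha, hfix⟩
    obtain ⟨ℓ, hℓ, hℓa, k, hk⟩ := (isOfFinAddOrder_of_finite a).exists_addOrderOf_nsmul_eq_prime ha
    have hℓm : ℓ ∣ m := hℓa.trans (addOrderOf_dvd_of_nsmul_eq_zero (by ext i; simp))
    have hcoord (i : ι) : ∃ y, ZMod.mulDivHom hℓm y = (k • a) i :=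
      ZMod.exists_mulDivHom_eq_of_nsmul_eq_zero hℓm hm <| by
        simpa [← hk] using congr_fun (addOrderOf_nsmul_eq_zero (k • a)) i
    choose v hv using hcoord
    have hka : ZMod.mulDivHom hℓm ∘ v = k • a := funext hv
    refine ⟨ℓ, hℓ, hℓm, v, ?_, fun A hA ↦ ?_⟩
    · rintro rfl
      have hka0 : k • a = 0 := by rw [← hka]; ext; simp
      rw [hka0, addOrderOf_zero] at hk
      exact hℓ.ne_one hk.symm
    · rw [← AddMonoidHom.intCast_mulVec_comp_eq_self_iff (ZMod.mulDivHom_injective hℓm hm), hka,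
        mulVec_smul, hfix A hA]
  · rintro ⟨ℓ, -, hℓm, v, hv, hfix⟩
    have hinj := ZMod.mulDivHom_injective hℓm hm
    refine ⟨ZMod.mulDivHom hℓm ∘ v, fun h ↦ hv ?_, fun A hA ↦
      (AddMonoidHom.intCast_mulVec_comp_eq_self_iff hinj A v).mpr (hfix A hA)⟩
    exact hinj.comp_left (h.trans (by ext; simp))

theorem exists_invariant_character_iff_transpose_fixed_vector_general
    (n m : ℕ) (hm : 2 ≤ m)
    (W : Subgroup (Matrix.GeneralLinearGroup (Fin n) ℤ)) :
    (∃ χ : AddChar (Fin n → ZMod m) ℂˣ, χ ≠ 1 ∧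
        ∀ w ∈ W, ∀ x : Fin n → ZMod m,
          χ (((w : Matrix (Fin n) (Fin n) ℤ).map (Int.cast : ℤ → ZMod m)).mulVec x) = χ x) ↔
      ∃ ℓ : ℕ, ℓ.Prime ∧ ℓ ∣ m ∧ ∃ v : Fin n → ZMod ℓ, v ≠ 0 ∧
        ∀ w ∈ W,
          ((w : Matrix (Fin n) (Fin n) ℤ).map (Int.cast : ℤ → ZMod ℓ)).transpose.mulVec v
            = v := by
  have hm0 : m ≠ 0 := by omega
  have : NeZero m := ⟨hm0⟩
  have characters_iff := exists_invariant_addChar_iff_transpose_fixed_vector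
    (ZMod.isPrimitive_toUnits_compAddChar_toCircle m)
    ((fun w : GL (Fin n) ℤ ↦ (w : Matrix (Fin n) (Fin n) ℤ).map (Int.cast : ℤ → ZMod m)) '' W)
  have vectors_iff := exists_fixed_vector_zmod_iff_exists_prime_dvd hm0
    ((fun w : GL (Fin n) ℤ ↦ (w : Matrix (Fin n) (Fin n) ℤ)ᵀ) '' W)
  simp only [Set.forall_mem_image, SetLike.mem_coe, transpose_map] at characters_iff vectors_iff
  exact characters_iff.trans vectors_iff

/-- Let `W ≤ GL(n, ℤ)` act on `(ℤ/mℤ)^n` via reduction of matrix entries mod `m`.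
There is a nontrivial `W`-invariant complex character of `(ℤ/mℤ)^n` if and only if for
some prime `ℓ ∣ m` the transposed mod-`ℓ` reduction of `W` fixes a nonzero vector of
`(ℤ/ℓℤ)^n`. -/
theorem exists_invariant_character_iff_transpose_fixed_vector
    (n m : ℕ) (hn : 1 ≤ n) (hm : 2 ≤ m)
    (W : Subgroup (Matrix.GeneralLinearGroup (Fin n) ℤ)) :
    (∃ χ : AddChar (Fin n → ZMod m) ℂˣ, χ ≠ 1 ∧
        ∀ w ∈ W, ∀ x : Fin n → ZMod m,
          χ (((w : Matrix (Fin n) (Fin n) ℤ).map (Int.cast : ℤ → ZMod m)).mulVec x) = χ x) ↔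
      ∃ ℓ : ℕ, ℓ.Prime ∧ ℓ ∣ m ∧ ∃ v : Fin n → ZMod ℓ, v ≠ 0 ∧
        ∀ w ∈ W,
          ((w : Matrix (Fin n) (Fin n) ℤ).map (Int.cast : ℤ → ZMod ℓ)).transpose.mulVec v
            = v :=
  exists_invariant_character_iff_transpose_fixed_vector_general n m hm W
end
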